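/- Let b ≥ 1 be an integer and x₀ > 0 a real number. If Δ_{b+1,B}(x) > 0 for all real x > x₀ and all integers B with 0 ≤ B ≤ b−1, then the function x ↦ P_{b+1}(x)/P_b(x) is monotonically increasing for x > x₀. -/
import Mathlib


open Polynomial Finset

/-- The polynomials `P n` defined by `P 0 = 1` and
`n * P n = X * ∑_{k=1}^n σ(k) * P (n-k)`, i.e. the coefficients of
`∏ (1 - q^j)^{-x} = ∑ P_n(x) q^n`. -/
noncomputable def P : ℕ → Polynomial ℝ
  | 0 => 1
  | n + 1 => ((n + 1 : ℝ)⁻¹) • (X * ∑ k ∈ Finset.range (n + 1),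
      ((∑ d ∈ (k + 1).divisors, d : ℕ) : ℝ) • P (n - k))

/-- `Δ a b = P (a-1) * P (b+1) - P a * P b`. -/
noncomputable def Δ (a b : ℕ) : Polynomial ℝ :=
  P (a - 1) * P (b + 1) - P a * P b

/-- `σ(k)` as a real number. -/
noncomputable def sg (k : ℕ) : ℝ := ((∑ d ∈ k.divisors, d : ℕ) : ℝ)

/-- `c k = σ(k)/k`. -/
noncomputable def c (k : ℕ) : ℝ := sg k / k

lemma P_zero : P 0 = 1 := by rw [P]

lemma P_succ (n : ℕ) : P (n + 1) = ((n + 1 : ℝ)⁻¹) • (X * ∑ k ∈ Finset.range (n + 1),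
    ((∑ d ∈ (k + 1).divisors, d : ℕ) : ℝ) • P (n - k)) := by rw [P]

lemma sg_pos (k : ℕ) : 0 < sg (k + 1) := by
  have h1 : (1 : ℕ) ∈ (k + 1).divisors := Nat.one_mem_divisors.2 (Nat.succ_ne_zero k)
  have : (0 : ℕ) < ∑ d ∈ (k + 1).divisors, d :=
    lt_of_lt_of_le one_pos (Finset.single_le_sum (fun i _ => Nat.zero_le i) h1)
  unfold sg
  exact_mod_cast this

lemma c_pos (k : ℕ) : 0 < c (k + 1) :=
  div_pos (sg_pos k) (by positivity)

lemma c_mul (k : ℕ) : ((k + 1 : ℕ) : ℝ) * c (k + 1) = sg (k + 1) := by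
  unfold c
  field_simp

/-- The defining recurrence in homogeneous form. -/
lemma Prec (m : ℕ) :
    (m : ℝ) • P m = X * ∑ j ∈ Finset.range m, sg (j + 1) • P (m - 1 - j) := by
  cases m with
  | zero => simp
  | succ n =>
    rw [P_succ n, smul_smul]
    have hne : ((n : ℝ) + 1) ≠ 0 := by positivity
    rw [show ((n + 1 : ℕ) : ℝ) = (n : ℝ) + 1 by push_cast; ring, mul_inv_cancel₀ hne, one_smul]
    have hidx : ∀ j : ℕ, n + 1 - 1 - j = n - j := fun j => by omega
    simp only [sg, hidx]

/-- Positivity of `P n` at positive reals. -/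
lemma P_pos (n : ℕ) (x : ℝ) (hx : 0 < x) : 0 < (P n).eval x := by
  induction n using Nat.strong_induction_on with
  | _ n ih =>
    cases n with
    | zero => simp [P]
    | succ m =>
      rw [P_succ m]
      simp only [eval_smul, eval_mul, eval_X, eval_finset_sum, smul_eq_mul]
      have hs : 0 < ∑ k ∈ Finset.range (m + 1),
          ((∑ d ∈ (k + 1).divisors, d : ℕ) : ℝ) * (P (m - k)).eval x := by
        refine Finset.sum_pos (fun k hk => ?_) ⟨0, Finset.mem_range.2 (Nat.succ_pos m)⟩
        exact mul_pos (sg_pos k) (ih (m - k) (by omega) )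
      positivity

/-- The derivative identity `P_n' = ∑_{k=1}^n c_k P_{n-k}`. -/
lemma Pderiv (n : ℕ) :
    (P n).derivative = ∑ k ∈ Finset.range n, c (k + 1) • P (n - 1 - k) := by
  induction n using Nat.strong_induction_on with
  | _ n ih =>
    cases n with
    | zero => simp [P]
    | succ m =>
      have hne : ((m : ℝ) + 1) ≠ 0 := by positivity
      rw [P_succ m]
      rw [derivative_smul, derivative_mul, derivative_X, one_mul, derivative_sum]
      simp only [derivative_smul]
      rw [inv_smul_eq_iff₀ hne]
      -- RHS of goal (after clearing the inverse):
      -- ((m:ℝ)+1) • ∑_{k<m+1} c(k+1) • P (m-k)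
      have key : ((m : ℝ) + 1) • ∑ k ∈ Finset.range (m + 1), c (k + 1) • P (m + 1 - 1 - k)
          = (∑ k ∈ Finset.range (m + 1),
              ((∑ d ∈ (k + 1).divisors, d : ℕ) : ℝ) • P (m - k))
            + X * ∑ k ∈ Finset.range (m + 1),
              ((∑ d ∈ (k + 1).divisors, d : ℕ) : ℝ) • (P (m - k)).derivative := by
        rw [Finset.smul_sum]
        have step1 : ∀ k ∈ Finset.range (m + 1),
            ((m : ℝ) + 1) • (c (k + 1) • P (m + 1 - 1 - k))
            = sg (k + 1) • P (m - k) + c (k + 1) • ((((m - k : ℕ)) : ℝ) • P (m - k)) := by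
          intro k hk
          have hk' : k ≤ m := Nat.lt_succ_iff.1 (Finset.mem_range.1 hk)
          have hms : (m + 1 - 1 - k) = m - k := by omega
          rw [hms, smul_smul, smul_smul, ← add_smul]
          congr 1
          have hcast : ((m - k : ℕ) : ℝ) = (m : ℝ) - (k : ℝ) := by
            push_cast [hk']; ring
          have := c_mul k
          have hck : ((k : ℝ) + 1) * c (k + 1) = sg (k + 1) := by
            rw [← this]; push_cast; ring
          rw [hcast]
          nlinarith [hck]
        rw [Finset.sum_congr rfl step1, Finset.sum_add_distrib]
        have hB : ∑ k ∈ Finset.range (m + 1), c (k + 1) • ((((m - k : ℕ)) : ℝ) • P (m - k))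
            = X * ∑ k ∈ Finset.range (m + 1),
              ((∑ d ∈ (k + 1).divisors, d : ℕ) : ℝ) • (P (m - k)).derivative := by
          have hD : ∀ k ∈ Finset.range (m + 1), (P (m - k)).derivative
              = ∑ j ∈ Finset.range (m - k), c (j + 1) • P (m - k - 1 - j) :=
            fun k hk => ih (m - k) (by omega)
          calc ∑ k ∈ Finset.range (m + 1), c (k + 1) • ((((m - k : ℕ)) : ℝ) • P (m - k))
              = ∑ k ∈ Finset.range (m + 1), c (k + 1) •
                  (X * ∑ j ∈ Finset.range (m - k), sg (j + 1) • P (m - k - 1 - j)) := by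
                refine Finset.sum_congr rfl fun k hk => ?_
                rw [Prec (m - k)]
            _ = X * ∑ k ∈ Finset.range (m + 1), ∑ j ∈ Finset.range (m - k),
                  (c (k + 1) * sg (j + 1)) • P (m - k - 1 - j) := by
                rw [Finset.mul_sum]
                refine Finset.sum_congr rfl fun k hk => ?_
                rw [Finset.mul_sum, Finset.smul_sum, Finset.mul_sum]
                refine Finset.sum_congr rfl fun j hj => ?_
                rw [← mul_smul_comm, smul_smul]
            _ = X * ∑ k ∈ Finset.range (m + 1), ∑ j ∈ Finset.range (m - k),
                  (c (j + 1) * sg (k + 1)) • P (m - j - 1 - k) := by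
                congr 1
                refine Finset.sum_comm' fun k j => ?_
                simp only [Finset.mem_range]
                omega
            _ = X * ∑ k ∈ Finset.range (m + 1),
                  ((∑ d ∈ (k + 1).divisors, d : ℕ) : ℝ) • (P (m - k)).derivative := by
                congr 1
                refine Finset.sum_congr rfl fun k hk => ?_
                rw [hD k hk, Finset.smul_sum]
                refine Finset.sum_congr rfl fun j hj => ?_
                rw [smul_smul]
                have : (m - j - 1 - k) = (m - k - 1 - j) := by omega
                rw [this]
                congr 1
                show c (j + 1) * sg (k + 1) = sg (k + 1) * c (j + 1)
                ring
        rw [hB]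
        simp only [sg]
      exact key.symm

/-- The Wronskian-type identity expressing the numerator of the derivative of the
ratio in terms of the `Δ` polynomials. -/
lemma wronskian_eq (b : ℕ) (hb : 1 ≤ b) :
    (P (b + 1)).derivative * P b - (P b).derivative * P (b + 1)
      = (∑ k ∈ Finset.range b, c (k + 1) • Δ (b + 1) (b - 1 - k)) + c (b + 1) • P b := by
  rw [Pderiv (b + 1), Pderiv b]
  rw [Finset.sum_range_succ]
  have h0 : (b + 1 - 1 - b) = 0 := by omega
  rw [h0, P_zero]
  rw [add_mul, smul_mul_assoc, one_mul, Finset.sum_mul, Finset.sum_mul]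
  have : ∀ k ∈ Finset.range b,
      c (k + 1) • P (b + 1 - 1 - k) * P b - c (k + 1) • P (b - 1 - k) * P (b + 1)
      = c (k + 1) • Δ (b + 1) (b - 1 - k) := by
    intro k hk
    have hk' : k < b := Finset.mem_range.1 hk
    unfold Δ
    have h1 : (b + 1 - 1) = b := by omega
    have h2 : (b - 1 - k + 1) = b - k := by omega
    rw [h1, h2, smul_sub, smul_mul_assoc, smul_mul_assoc, ← smul_sub,
      mul_comm (P (b - k)) (P b), mul_comm (P (b - 1 - k)) (P (b + 1))]
    rw [smul_sub]
  rw [← Finset.sum_congr rfl this, Finset.sum_sub_distrib]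
  abel

theorem stmt18 (b : ℕ) (hb : 1 ≤ b) (x₀ : ℝ) (hx₀ : 0 < x₀)
    (h : ∀ B : ℕ, B ≤ b - 1 → ∀ x : ℝ, x₀ < x → 0 < (Δ (b + 1) B).eval x) :
    MonotoneOn (fun x : ℝ => (P (b + 1)).eval x / (P b).eval x) (Set.Ioi x₀) := by
  have hgne : ∀ x ∈ Set.Ioi x₀, (P b).eval x ≠ 0 := fun x hx =>
    ne_of_gt (P_pos b x (lt_trans hx₀ hx))
  have hderiv : ∀ x ∈ Set.Ioi x₀, HasDerivAt
      (fun y : ℝ => (P (b + 1)).eval y / (P b).eval y)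
      (((P (b + 1)).derivative.eval x * (P b).eval x
        - (P (b + 1)).eval x * (P b).derivative.eval x) / ((P b).eval x) ^ 2) x := by
    intro x hx
    exact ((P (b + 1)).hasDerivAt x).div ((P b).hasDerivAt x) (hgne x hx)
  have hnum : ∀ x ∈ Set.Ioi x₀,
      0 < (P (b + 1)).derivative.eval x * (P b).eval x
        - (P (b + 1)).eval x * (P b).derivative.eval x := by
    intro x hx
    have hx' : x₀ < x := hx
    have hxpos : 0 < x := lt_trans hx₀ hx'
    have key := wronskian_eq b hb
    have := congrArg (Polynomial.eval x) key
    simp only [eval_sub, eval_mul, eval_add, eval_smul, eval_finset_sum, smul_eq_mul] at this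
    have hΔ : 0 < ∑ k ∈ Finset.range b, c (k + 1) * (Δ (b + 1) (b - 1 - k)).eval x := by
      refine Finset.sum_pos (fun k hk => ?_) ⟨0, Finset.mem_range.2 (by omega)⟩
      exact mul_pos (c_pos k) (h (b - 1 - k) (by omega) x hx')
    have hPb : 0 < (P b).eval x := P_pos b x hxpos
    nlinarith [c_pos b, mul_pos (c_pos b) hPb]
  have hmono : StrictMonoOn (fun x : ℝ => (P (b + 1)).eval x / (P b).eval x) (Set.Ioi x₀) := by
    refine strictMonoOn_of_deriv_pos (convex_Ioi x₀) ?_ ?_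
    · exact ContinuousOn.div (P (b + 1)).continuousOn (P b).continuousOn hgne
    · intro x hx
      rw [interior_Ioi] at hx
      rw [(hderiv x hx).deriv]
      exact div_pos (hnum x hx) (pow_pos (P_pos b x (lt_trans hx₀ hx)) 2)
  exact hmono.monotoneOn
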